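/- arXiv:2209.08932 — 9 statements merged into one kernel-verified Lean document; each statement's English description precedes it below -/
import Mathlib

section
/- For patterns u, v : Fin m → ℝ of the same length m, u and v have the same relative order if and only if they have equal rank counts at every index; that is, (∀ i j, u i < u j ↔ v i < v j) ↔ (∀ i, the cardinality of {j : u j < u i} equals the cardinality of {j : v j < v i}). (No injectivity hypothesis is needed.) -/
lemma rank_lt_iff {m : ℕ} (w : Fin m → ℝ) (i j : Fin m) :
    w i < w j ↔ {k | w k < w i}.ncard < {k | w k < w j}.ncard := by
  constructor
  · intro h
    apply Set.ncard_lt_ncard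
    · refine ⟨fun k hk => ?_, fun hsub => ?_⟩
      · simp only [Set.mem_setOf_eq] at hk ⊢
        exact lt_trans hk h
      · have hi : i ∈ {k | w k < w j} := h
        have := hsub hi
        simp only [Set.mem_setOf_eq] at this
        exact lt_irrefl _ this
    · exact Set.toFinite _
  · intro h
    by_contra hle
    push_neg at hle
    have : {k | w k < w j} ⊆ {k | w k < w i} := fun k hk => lt_of_lt_of_le hk hle
    exact absurd (Set.ncard_le_ncard this (Set.toFinite _)) (not_le.mpr h)

/-- Two patterns of the same length have the same relative order iff they have
equal rank counts at every index. -/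
theorem rank_counts_eq_iff_same_relative_order {m : ℕ} (u v : Fin m → ℝ) :
    (∀ i j, u i < u j ↔ v i < v j) ↔
      (∀ i, {j | u j < u i}.ncard = {j | v j < v i}.ncard) := by
  constructor
  · intro h i
    congr 1
    ext j
    exact h j i
  · intro h i j
    rw [rank_lt_iff u, rank_lt_iff v, h i, h j]
end

section
/- Order-preserving pattern mining satisfies anti-monotonicity: for any time series t : Fin n → ℝ and any pattern r of length m+1, sup(r, t) ≤ sup(prefix(r), t) and sup(r, t) ≤ sup(suffix(r), t). Consequently, for any threshold minsup, if sup(prefix(r), t) < minsup or sup(suffix(r), t) < minsup, then sup(r, t) < minsup (an infrequent prefix or suffix sub-pattern cannot yield a frequent super-pattern). -/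
/-- For a pattern `u` of length `m+1`, its prefix `(u 0, …, u (m-1))`. -/
def prefixPat {m : ℕ} {α : Type*} (u : Fin (m + 1) → α) : Fin m → α :=
  fun j => u j.castSucc

/-- For a pattern `u` of length `m+1`, its suffix `(u 1, …, u m)`. -/
def suffixPat {m : ℕ} {α : Type*} (u : Fin (m + 1) → α) : Fin m → α :=
  fun j => u j.succ

/-- `p` occurs in the time series `t` at (0-based) ending position `i`:
the window `(t (i-m+1), …, t i)` has the same relative order as `p`. -/
def occursAt {n m : ℕ} {α : Type*} [LT α] (t : Fin n → ℝ) (p : Fin m → α) (i : ℕ) : Prop :=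
  ∃ (h1 : m ≤ i + 1) (h2 : i < n),
    ∀ a b : Fin m,
      (t ⟨i + 1 - m + a.val, by have := a.isLt; omega⟩ <
        t ⟨i + 1 - m + b.val, by have := b.isLt; omega⟩) ↔ p a < p b

/-- The support of `p` in `t`: the number of ending positions at which `p` occurs. -/
noncomputable def supCount {n m : ℕ} {α : Type*} [LT α] (t : Fin n → ℝ) (p : Fin m → α) : ℕ :=
  {i : ℕ | occursAt t p i}.ncard

lemma occ_finite {n m : ℕ} {α : Type*} [LT α] (t : Fin n → ℝ) (p : Fin m → α) :
    {i : ℕ | occursAt t p i}.Finite :=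
  (Set.finite_Iio n).subset fun i hi => hi.2.1

lemma occ_suffix {n m : ℕ} {t : Fin n → ℝ} {r : Fin (m + 1) → ℝ} {i : ℕ}
    (h : occursAt t r i) : occursAt t (suffixPat r) i := by
  obtain ⟨h1, h2, h3⟩ := h
  refine ⟨by omega, h2, fun a b => ?_⟩
  have := h3 a.succ b.succ
  simp only [suffixPat]
  convert this using 3 <;> simp [Fin.ext_iff] <;> omega

lemma occ_prefix {n k : ℕ} {t : Fin n → ℝ} {r : Fin (k + 1 + 1) → ℝ} {i : ℕ}
    (h : occursAt t r i) : occursAt t (prefixPat r) (i - 1) := by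
  obtain ⟨h1, h2, h3⟩ := h
  refine ⟨by omega, by omega, fun a b => ?_⟩
  have := h3 a.castSucc b.castSucc
  simp only [prefixPat]
  convert this using 3 <;> simp [Fin.ext_iff] <;> omega

/-- Anti-monotonicity of order-preserving pattern mining: the support of a
super-pattern is at most that of its prefix and of its suffix; hence an
infrequent prefix or suffix sub-pattern cannot yield a frequent super-pattern. -/
theorem support_anti_monotone {n m : ℕ} (t : Fin n → ℝ) (r : Fin (m + 1) → ℝ) :
    supCount t r ≤ supCount t (prefixPat r) ∧
    supCount t r ≤ supCount t (suffixPat r) ∧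
    ∀ minsup : ℕ,
      (supCount t (prefixPat r) < minsup ∨ supCount t (suffixPat r) < minsup) →
      supCount t r < minsup := by
  have hsuf : supCount t r ≤ supCount t (suffixPat r) :=
    Set.ncard_le_ncard (fun i hi => occ_suffix hi) (occ_finite t (suffixPat r))
  have hpre : supCount t r ≤ supCount t (prefixPat r) := by
    cases m with
    | zero =>
      refine Set.ncard_le_ncard (fun i hi => ?_) (occ_finite t (prefixPat r))
      exact ⟨by omega, hi.2.1, fun a b => a.elim0⟩
    | succ k =>
      refine Set.ncard_le_ncard_of_injOn (fun i => i - 1)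
        (fun i hi => occ_prefix hi) (fun i hi j hj hij => ?_)
        (occ_finite t (prefixPat r))
      have h1 : k + 1 + 1 ≤ i + 1 := hi.1
      have h2 : k + 1 + 1 ≤ j + 1 := hj.1
      simp only at hij
      omega
  refine ⟨hpre, hsuf, fun minsup h => ?_⟩
  rcases h with h | h <;> omega
end

section
/- (Correctness of Rule 2 of SPF.) Let u, v : Fin (m+1) → ℝ be patterns such that the prefixes of u and v have the same relative order, the suffixes of u and v have the same relative order, and the comparison between first and last elements agrees: (u 0 < u m ↔ v 0 < v m) and (u m < u 0 ↔ v m < v 0). Then u and v have the same relative order. In other words, the relative order of a length-(m+1) window is completely determined by the relative orders of its prefix and suffix together with the order relation between its first and last elements. -/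
/-- Correctness of Rule 2 of SPF: the relative order of a length-`(m+1)` window
is completely determined by the relative orders of its prefix and suffix
together with the order relation between its first and last elements. -/
theorem same_relative_order_of_prefix_suffix_endpoints {m : ℕ}
    (u v : Fin (m + 1) → ℝ)
    (hpre : ∀ i j, prefixPat u i < prefixPat u j ↔ prefixPat v i < prefixPat v j)
    (hsuf : ∀ i j, suffixPat u i < suffixPat u j ↔ suffixPat v i < suffixPat v j)
    (h1 : u 0 < u (Fin.last m) ↔ v 0 < v (Fin.last m))
    (h2 : u (Fin.last m) < u 0 ↔ v (Fin.last m) < v 0) :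
    ∀ i j, u i < u j ↔ v i < v j := by
  intro i j
  by_cases hi : i = Fin.last m
  · by_cases hj : j = Fin.last m
    · subst hi hj; simp
    · by_cases hj0 : j = 0
      · subst hi hj0; exact h2
      · obtain ⟨j', rfl⟩ := Fin.exists_succ_eq.2 hj0
        by_cases hi0 : i = 0
        · exfalso
          have hm : m = 0 := by
            have := hi0 ▸ hi
            simpa [Fin.ext_iff] using congrArg Fin.val this.symm
          subst hm
          exact j'.elim0
        · obtain ⟨i', rfl⟩ := Fin.exists_succ_eq.2 hi0
          exact hsuf i' j'
  · by_cases hj : j = Fin.last m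
    · by_cases hi0 : i = 0
      · subst hi0 hj; exact h1
      · obtain ⟨i', rfl⟩ := Fin.exists_succ_eq.2 hi0
        have hm : m ≠ 0 := by
          rintro rfl
          exact i'.elim0
        have hj0 : j ≠ 0 := by
          subst hj
          simp [Fin.ext_iff, hm]
        obtain ⟨j', rfl⟩ := Fin.exists_succ_eq.2 hj0
        exact hsuf i' j'
    · obtain ⟨i', rfl⟩ := Fin.exists_castSucc_eq.2 hi
      obtain ⟨j', rfl⟩ := Fin.exists_castSucc_eq.2 hj
      exact hpre i' j'
end

section
/- (Correctness of Rule 1 of SPF.) Let u : Fin (m+1) → ℝ and set a = cardinality of {j : j < m ∧ u j < u 0} and b = cardinality of {j : 1 ≤ j ∧ u j < u m}. If a ≠ b, then for every pattern v : Fin (m+1) → ℝ such that the prefixes of u and v have the same relative order and the suffixes of u and v have the same relative order, u and v have the same relative order. In other words, when the prefix-rank of the first element differs from the suffix-rank of the last element, the prefix and suffix relative orders alone determine the full relative order of the window. -/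
section RankCounts

variable {α β : Type*} {m : ℕ}

noncomputable def prefixRankFirst [LT α] (u : Fin (m + 1) → α) : ℕ :=
  {j : Fin (m + 1) | (j : ℕ) < m ∧ u j < u 0}.ncard

noncomputable def suffixRankLast [LT α] (u : Fin (m + 1) → α) : ℕ :=
  {j : Fin (m + 1) | 1 ≤ (j : ℕ) ∧ u j < u (Fin.last m)}.ncard

theorem prefixRankFirst_le_suffixRankLast [Preorder α] {u : Fin (m + 1) → α}
    (h : u 0 ≤ u (Fin.last m)) : prefixRankFirst u ≤ suffixRankLast u :=
  Set.ncard_le_ncard fun j ⟨_, hj⟩ =>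
    ⟨Nat.one_le_iff_ne_zero.2 fun hj0 => hj.ne (congrArg u (Fin.ext hj0)), hj.trans_le h⟩

theorem suffixRankLast_le_prefixRankFirst [Preorder α] {u : Fin (m + 1) → α}
    (h : u (Fin.last m) ≤ u 0) : suffixRankLast u ≤ prefixRankFirst u :=
  Set.ncard_le_ncard fun j ⟨_, hj⟩ =>
    ⟨(Nat.lt_succ_iff.1 j.isLt).lt_of_ne fun hjm => hj.ne (congrArg u (Fin.ext hjm)),
      hj.trans_le h⟩

variable [LinearOrder α] [LinearOrder β] {u : Fin (m + 1) → α} {v : Fin (m + 1) → β}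

theorem apply_zero_lt_apply_last_iff (h : prefixRankFirst u ≠ suffixRankLast u) :
    u 0 < u (Fin.last m) ↔ prefixRankFirst u < suffixRankLast u :=
  ⟨fun hlt => (prefixRankFirst_le_suffixRankLast hlt.le).lt_of_ne h,
    fun hr => lt_of_not_ge fun hle => hr.not_ge (suffixRankLast_le_prefixRankFirst hle)⟩

theorem apply_last_lt_apply_zero_iff (h : prefixRankFirst u ≠ suffixRankLast u) :
    u (Fin.last m) < u 0 ↔ suffixRankLast u < prefixRankFirst u :=
  ⟨fun hlt => (suffixRankLast_le_prefixRankFirst hlt.le).lt_of_ne h.symm,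
    fun hr => lt_of_not_ge fun hle => hr.not_ge (prefixRankFirst_le_suffixRankLast hle)⟩

theorem lt_iff_lt_of_prefixPat
    (hpre : ∀ i j, prefixPat u i < prefixPat u j ↔ prefixPat v i < prefixPat v j)
    {i j : Fin (m + 1)} (hi : i ≠ Fin.last m) (hj : j ≠ Fin.last m) :
    u i < u j ↔ v i < v j := by
  obtain ⟨i, rfl⟩ := Fin.exists_castSucc_eq.2 hi
  obtain ⟨j, rfl⟩ := Fin.exists_castSucc_eq.2 hj
  exact hpre i j

theorem lt_iff_lt_of_suffixPat
    (hsuf : ∀ i j, suffixPat u i < suffixPat u j ↔ suffixPat v i < suffixPat v j)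
    {i j : Fin (m + 1)} (hi : i ≠ 0) (hj : j ≠ 0) :
    u i < u j ↔ v i < v j := by
  obtain ⟨i, rfl⟩ := Fin.exists_succ_eq.2 hi
  obtain ⟨j, rfl⟩ := Fin.exists_succ_eq.2 hj
  exact hsuf i j

theorem prefixRankFirst_eq_of_prefixPat
    (hpre : ∀ i j, prefixPat u i < prefixPat u j ↔ prefixPat v i < prefixPat v j) :
    prefixRankFirst u = prefixRankFirst v := by
  unfold prefixRankFirst
  congr 1
  ext j
  refine and_congr_right fun hj => lt_iff_lt_of_prefixPat hpre ?_ ?_ <;>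
    simp only [ne_eq, Fin.ext_iff, Fin.val_last, Fin.val_zero] <;> omega

theorem suffixRankLast_eq_of_suffixPat
    (hsuf : ∀ i j, suffixPat u i < suffixPat u j ↔ suffixPat v i < suffixPat v j) :
    suffixRankLast u = suffixRankLast v := by
  unfold suffixRankLast
  congr 1
  ext j
  refine and_congr_right fun hj => lt_iff_lt_of_suffixPat hsuf ?_ ?_ <;>
    simp only [ne_eq, Fin.ext_iff, Fin.val_last, Fin.val_zero] <;> have := j.isLt <;> omega

theorem lt_iff_lt_of_prefixPat_of_suffixPat
    (hpre : ∀ i j, prefixPat u i < prefixPat u j ↔ prefixPat v i < prefixPat v j)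
    (hsuf : ∀ i j, suffixPat u i < suffixPat u j ↔ suffixPat v i < suffixPat v j)
    (hfirst : u 0 < u (Fin.last m) ↔ v 0 < v (Fin.last m))
    (hlast : u (Fin.last m) < u 0 ↔ v (Fin.last m) < v 0) (i j : Fin (m + 1)) :
    u i < u j ↔ v i < v j := by
  by_cases hp : i ≠ Fin.last m ∧ j ≠ Fin.last m
  · exact lt_iff_lt_of_prefixPat hpre hp.1 hp.2
  by_cases hs : i ≠ 0 ∧ j ≠ 0
  · exact lt_iff_lt_of_suffixPat hsuf hs.1 hs.2
  obtain ⟨rfl, rfl⟩ | ⟨rfl, rfl⟩ : (i = 0 ∧ j = Fin.last m) ∨ (i = Fin.last m ∧ j = 0) := by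
    have := i.isLt
    have := j.isLt
    simp only [ne_eq, Fin.ext_iff, Fin.val_last, Fin.val_zero] at hp hs ⊢
    omega
  exacts [hfirst, hlast]

end RankCounts

/-- Correctness of Rule 1 of SPF: when the prefix-rank of the first element
differs from the suffix-rank of the last element, the prefix and suffix
relative orders alone determine the full relative order of the window. -/
theorem same_relative_order_of_prefix_suffix_of_rank_ne {m : ℕ}
    (u : Fin (m + 1) → ℝ) (a b : ℕ)
    (ha : a = {j : Fin (m + 1) | (j : ℕ) < m ∧ u j < u 0}.ncard)
    (hb : b = {j : Fin (m + 1) | 1 ≤ (j : ℕ) ∧ u j < u (Fin.last m)}.ncard)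
    (hab : a ≠ b) :
    ∀ v : Fin (m + 1) → ℝ,
      (∀ i j, prefixPat u i < prefixPat u j ↔ prefixPat v i < prefixPat v j) →
      (∀ i j, suffixPat u i < suffixPat u j ↔ suffixPat v i < suffixPat v j) →
      (∀ i j, u i < u j ↔ v i < v j) := by
  intro v hpre hsuf
  subst ha hb
  have hu : prefixRankFirst u ≠ suffixRankLast u := hab
  have hpreRank := prefixRankFirst_eq_of_prefixPat hpre
  have hsufRank := suffixRankLast_eq_of_suffixPat hsuf
  have hv : prefixRankFirst v ≠ suffixRankLast v := hpreRank ▸ hsufRank ▸ hu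
  refine lt_iff_lt_of_prefixPat_of_suffixPat hpre hsuf ?_ ?_
  · rw [apply_zero_lt_apply_last_iff hu, apply_zero_lt_apply_last_iff hv, hpreRank, hsufRank]
  · rw [apply_last_lt_apply_zero_iff hu, apply_last_lt_apply_zero_iff hv, hpreRank, hsufRank]
end

section
/- (Existence part of the completeness of pattern fusion, Theorem 3 of the paper.) Let m ≥ 1 and let p, q : Fin m → ℝ be injective patterns such that the suffix of p, (p 1, …, p (m−1)), and the prefix of q, (q 0, …, q (m−2)), have the same relative order. Then there exists an injective pattern s : Fin (m+1) → ℝ whose prefix (s 0, …, s (m−1)) has the same relative order as p and whose suffix (s 1, …, s m) has the same relative order as q. -/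
/-- Auxiliary separation lemma: given finsets `A ⊆ C`, `B ⊆ C` of reals with
every element of `A` below every element of `B`, there is a real `x` outside
`C` strictly above all of `A` and strictly below all of `B`. -/
lemma exists_sep (A B C : Finset ℝ) (hAB : ∀ a ∈ A, ∀ b ∈ B, a < b)
    (hAC : A ⊆ C) (hBC : B ⊆ C) (hC : C.Nonempty) :
    ∃ x, x ∉ C ∧ (∀ a ∈ A, a < x) ∧ (∀ b ∈ B, x < b) := by
  set lo : ℝ := C.min' hC - 1 with hlo
  set hi : ℝ := C.max' hC + 1 with hhi
  set A' : Finset ℝ := insert lo A with hA'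
  set B' : Finset ℝ := insert hi B with hB'
  have hA'ne : A'.Nonempty := ⟨lo, Finset.mem_insert_self _ _⟩
  have hB'ne : B'.Nonempty := ⟨hi, Finset.mem_insert_self _ _⟩
  have hab' : ∀ a ∈ A', ∀ b ∈ B', a < b := by
    intro a ha b hb
    rcases Finset.mem_insert.mp ha with rfl | ha <;>
      rcases Finset.mem_insert.mp hb with rfl | hb
    · have := C.min'_le _ (C.max'_mem hC)
      simp only [hlo, hhi]; linarith
    · have := C.min'_le _ (hBC hb)
      simp only [hlo]; linarith
    · have := C.le_max' _ (hAC ha)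
      simp only [hhi]; linarith
    · exact hAB a ha b hb
  have hlt : A'.max' hA'ne < B'.min' hB'ne :=
    hab' _ (A'.max'_mem hA'ne) _ (B'.min'_mem hB'ne)
  have hinf : (Set.Ioo (A'.max' hA'ne) (B'.min' hB'ne)).Infinite :=
    Set.Ioo_infinite hlt
  obtain ⟨x, hx⟩ := (hinf.diff C.finite_toSet).nonempty
  refine ⟨x, ?_, ?_, ?_⟩
  · exact fun h => hx.2 h
  · intro a ha
    exact lt_of_le_of_lt (A'.le_max' _ (Finset.mem_insert_of_mem ha)) hx.1.1
  · intro b hb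
    exact lt_of_lt_of_le hx.1.2 (B'.min'_le _ (Finset.mem_insert_of_mem hb))

/-- Existence part of the completeness of pattern fusion (Theorem 3 of the
paper): if `suffix p` and `prefix q` have the same relative order, there is an
injective pattern one longer whose prefix is order-equivalent to `p` and whose
suffix is order-equivalent to `q`. -/
theorem fusion_exists {m : ℕ} (p q : Fin (m + 1) → ℝ)
    (hp : Function.Injective p) (hq : Function.Injective q)
    (hpq : ∀ i j : Fin m, suffixPat p i < suffixPat p j ↔ prefixPat q i < prefixPat q j) :
    ∃ s : Fin (m + 2) → ℝ, Function.Injective s ∧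
      (∀ i j : Fin (m + 1), prefixPat s i < prefixPat s j ↔ p i < p j) ∧
      (∀ i j : Fin (m + 1), suffixPat s i < suffixPat s j ↔ q i < q j) := by
  classical
  set C : Finset ℝ := Finset.image p Finset.univ with hCdef
  set A : Finset ℝ :=
    Finset.image (fun k : Fin m => p k.succ)
      (Finset.univ.filter fun k : Fin m => q k.castSucc < q (Fin.last m)) with hAdef
  set B : Finset ℝ :=
    Finset.image (fun k : Fin m => p k.succ)
      (Finset.univ.filter fun k : Fin m => q (Fin.last m) < q k.castSucc) with hBdef
  have hAB : ∀ a ∈ A, ∀ b ∈ B, a < b := by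
    intro a ha b hb
    simp only [hAdef, Finset.mem_image, Finset.mem_filter, Finset.mem_univ, true_and] at ha
    simp only [hBdef, Finset.mem_image, Finset.mem_filter, Finset.mem_univ, true_and] at hb
    obtain ⟨k, hk, rfl⟩ := ha
    obtain ⟨l, hl, rfl⟩ := hb
    exact (hpq k l).mpr (lt_trans hk hl)
  have hAC : A ⊆ C := by
    intro a ha
    simp only [hAdef, Finset.mem_image, Finset.mem_filter, Finset.mem_univ, true_and] at ha
    obtain ⟨k, _, rfl⟩ := ha
    exact Finset.mem_image_of_mem p (Finset.mem_univ _)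
  have hBC : B ⊆ C := by
    intro b hb
    simp only [hBdef, Finset.mem_image, Finset.mem_filter, Finset.mem_univ, true_and] at hb
    obtain ⟨k, _, rfl⟩ := hb
    exact Finset.mem_image_of_mem p (Finset.mem_univ _)
  have hCne : C.Nonempty := ⟨p 0, Finset.mem_image_of_mem p (Finset.mem_univ _)⟩
  obtain ⟨x, hxC, hxA, hxB⟩ := exists_sep A B C hAB hAC hBC hCne
  have hxp : ∀ i : Fin (m + 1), x ≠ p i := by
    intro i h
    exact hxC (h ▸ Finset.mem_image_of_mem p (Finset.mem_univ i))
  -- the two key comparison facts about x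
  have hx1 : ∀ k : Fin m, p k.succ < x ↔ q k.castSucc < q (Fin.last m) := by
    intro k
    constructor
    · intro h
      rcases lt_trichotomy (q k.castSucc) (q (Fin.last m)) with h' | h' | h'
      · exact h'
      · exact absurd (hq h') (Fin.ne_of_lt (Fin.castSucc_lt_last k))
      · have : x < p k.succ := hxB _ (by
          simp only [hBdef, Finset.mem_image, Finset.mem_filter, Finset.mem_univ, true_and]
          exact ⟨k, h', rfl⟩)
        exact absurd h (lt_asymm this)
    · intro h'
      exact hxA _ (by
        simp only [hAdef, Finset.mem_image, Finset.mem_filter, Finset.mem_univ, true_and]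
        exact ⟨k, h', rfl⟩)
  have hx2 : ∀ k : Fin m, x < p k.succ ↔ q (Fin.last m) < q k.castSucc := by
    intro k
    constructor
    · intro h
      rcases lt_trichotomy (q (Fin.last m)) (q k.castSucc) with h' | h' | h'
      · exact h'
      · exact absurd (hq h') (Fin.ne_of_lt (Fin.castSucc_lt_last k)).symm
      · have : p k.succ < x := (hx1 k).mpr h'
        exact absurd h (lt_asymm this)
    · intro h'
      exact hxB _ (by
        simp only [hBdef, Finset.mem_image, Finset.mem_filter, Finset.mem_univ, true_and]
        exact ⟨k, h', rfl⟩)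
  refine ⟨Fin.snoc p x, ?_, ?_, ?_⟩
  · -- injectivity
    intro a b hab
    induction a using Fin.lastCases with
    | last =>
      induction b using Fin.lastCases with
      | last => rfl
      | cast j =>
        simp only [Fin.snoc_last, Fin.snoc_castSucc] at hab
        exact absurd hab (hxp j)
    | cast i =>
      induction b using Fin.lastCases with
      | last =>
        simp only [Fin.snoc_last, Fin.snoc_castSucc] at hab
        exact absurd hab.symm (hxp i)
      | cast j =>
        simp only [Fin.snoc_castSucc] at hab
        exact congrArg Fin.castSucc (hp hab)
  · -- prefix
    intro i j
    simp [prefixPat, Fin.snoc_castSucc]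
  · -- suffix
    intro i j
    induction i using Fin.lastCases with
    | last =>
      induction j using Fin.lastCases with
      | last => simp [suffixPat]
      | cast l =>
        simp only [suffixPat, Fin.succ_last, Fin.snoc_last, Fin.succ_castSucc,
          Fin.snoc_castSucc]
        exact hx2 l
    | cast k =>
      induction j using Fin.lastCases with
      | last =>
        simp only [suffixPat, Fin.succ_last, Fin.snoc_last, Fin.succ_castSucc,
          Fin.snoc_castSucc]
        exact hx1 k
      | cast l =>
        simp only [suffixPat, Fin.succ_castSucc, Fin.snoc_castSucc]
        exact hpq k l
end

section
/- (Case 2 of pattern fusion yields exactly two order-classes.) Let m ≥ 1 and let p, q : Fin m → ℝ be injective patterns such that the suffix of p and the prefix of q have the same relative order, and suppose the rank counts agree: cardinality of {j : p j < p 0} = cardinality of {j : q j < q (m−1)}. Then there exist injective patterns s, s' : Fin (m+1) → ℝ, each of whose prefixes has the same relative order as p and whose suffixes have the same relative order as q, with s 0 < s m and s' m < s' 0; in particular s and s' do not have the same relative order. Moreover, every injective pattern of length m+1 whose prefix has the same relative order as p and whose suffix has the same relative order as q has the same relative order as s or as s'. -/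
/-! The rank condition says that `p 0` sits among `p 1, …, p m` exactly where `q m` sits among
`q 0, …, q (m-1)`; as these two lists have the same relative order, `p` has the relative order of
the rotation `(q m, q 0, …, q (m-1))`. A fusion is therefore `q` preceded by a new entry placed
immediately below or immediately above `q m`, and there are exactly two such choices up to order.
Conversely, the relative order of a pattern of length `m + 2` is determined by those of its prefix
and suffix together with the comparison of its first and last entries, the only pair of positions
lying in neither. -/

variable {ι α β γ : Type*}

def SameOrder [LT α] [LT β] (u : ι → α) (v : ι → β) : Prop :=
  ∀ i j, u i < u j ↔ v i < v j

namespace SameOrder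

variable [LT α] [LT β] [LT γ] {u : ι → α} {v : ι → β} {w : ι → γ}

theorem symm (h : SameOrder u v) : SameOrder v u := fun i j => (h i j).symm

theorem trans (h : SameOrder u v) (h' : SameOrder v w) : SameOrder u w :=
  fun i j => (h i j).trans (h' i j)

theorem setOf_lt_eq (h : SameOrder u v) (i : ι) : {k | u k < u i} = {k | v k < v i} :=
  Set.ext fun k => h k i

end SameOrder

theorem StrictMono.sameOrder_comp [LinearOrder α] [Preorder β] {f : α → β} (hf : StrictMono f)
    (u : ι → α) : SameOrder (f ∘ u) u :=
  fun _ _ => hf.lt_iff_lt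

theorem SameOrder.cons [Preorder α] [Preorder β] {n : ℕ} {u : Fin n → α} {v : Fin n → β}
    {x : α} {y : β} (h : SameOrder u v)
    (hxy : ∀ k, (x < u k ↔ y < v k) ∧ (u k < x ↔ v k < y)) :
    SameOrder (Fin.cons x u : Fin (n + 1) → α) (Fin.cons y v) := by
  intro i j
  cases i using Fin.cases <;> cases j using Fin.cases <;> simp [h _ _, hxy]

noncomputable def rank [LT α] (u : ι → α) (i : ι) : ℕ :=
  {j | u j < u i}.ncard

section LinearOrder

variable [Finite ι] [LinearOrder α] [LinearOrder β]

theorem ncard_setOf_lt_mono (u : ι → α) {x y : α} (hxy : x ≤ y) :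
    {k | u k < x}.ncard ≤ {k | u k < y}.ncard :=
  Set.ncard_le_ncard fun _ hk => lt_of_lt_of_le hk hxy

theorem rank_lt_ncard_setOf_lt {u : ι → α} {k : ι} {x : α} (hk : u k < x) :
    rank u k < {i | u i < x}.ncard :=
  Set.ncard_lt_ncard <| (Set.ssubset_iff_of_subset fun _ hi => hi.trans hk).mpr
    ⟨k, hk, lt_irrefl _⟩

theorem rank_lt_rank_iff (u : ι → α) (i j : ι) : rank u i < rank u j ↔ u i < u j :=
  ⟨fun h => not_le.mp fun hji => h.not_ge (ncard_setOf_lt_mono u hji), rank_lt_ncard_setOf_lt⟩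

theorem rank_injective {u : ι → α} (hu : Function.Injective u) :
    Function.Injective (rank u) := by
  intro i j h
  by_contra hij
  rcases (hu.ne hij).lt_or_gt with hlt | hlt
  · exact ((rank_lt_rank_iff u i j).mpr hlt).ne h
  · exact ((rank_lt_rank_iff u j i).mpr hlt).ne' h

theorem sameOrder_two_mul_rank (u : ι → α) : SameOrder (fun i => 2 * (rank u i : ℤ)) u :=
  fun i j => by dsimp only; rw [← rank_lt_rank_iff u]; omega

theorem lt_apply_iff_ncard_le_rank {u : ι → α} {x : α} (hx : x ∉ Set.range u) (k : ι) :
    x < u k ↔ {i | u i < x}.ncard ≤ rank u k := by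
  refine ⟨fun h => ncard_setOf_lt_mono u h.le, fun h => ?_⟩
  by_contra hk
  have hkx : u k < x := lt_of_le_of_ne (not_lt.mp hk) fun h => hx ⟨k, h⟩
  exact (rank_lt_ncard_setOf_lt hkx).not_ge h

theorem SameOrder.lt_apply_iff_of_ncard_eq {u : ι → α} {v : ι → β} (h : SameOrder u v)
    {x : α} {y : β} (hx : x ∉ Set.range u) (hy : y ∉ Set.range v)
    (hxy : {k | u k < x}.ncard = {k | v k < y}.ncard) (k : ι) :
    (x < u k ↔ y < v k) ∧ (u k < x ↔ v k < y) := by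
  have hlt : x < u k ↔ y < v k := by
    rw [lt_apply_iff_ncard_le_rank hx, lt_apply_iff_ncard_le_rank hy, hxy, rank, rank,
      h.setOf_lt_eq]
  refine ⟨hlt, ?_⟩
  have hkx : u k ≠ x := fun h => hx ⟨k, h⟩
  have hky : v k ≠ y := fun h => hy ⟨k, h⟩
  rw [← hkx.le_iff_lt, ← hky.le_iff_lt, ← not_lt, ← not_lt, hlt]

end LinearOrder

section Fusion

variable {m : ℕ}

theorem prefixPat_cons (x : α) (u : Fin (m + 1) → α) :
    prefixPat (Fin.cons x u : Fin (m + 2) → α) = Fin.cons x (prefixPat u) := by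
  funext j
  cases j using Fin.cases <;> rfl

theorem ncard_setOf_lt_eq_suffixPat [LT α] (u : Fin (m + 1) → α) {x : α} (hx : ¬ u 0 < x) :
    {j | u j < x}.ncard = {k | suffixPat u k < x}.ncard :=
  (Set.ncard_preimage_of_injective_subset_range (Fin.succ_injective m) fun _ hj =>
    Fin.exists_succ_eq.mpr fun h => hx (h ▸ hj)).symm

theorem ncard_setOf_lt_eq_prefixPat [LT α] (u : Fin (m + 1) → α) {x : α}
    (hx : ¬ u (Fin.last m) < x) :
    {j | u j < x}.ncard = {k | prefixPat u k < x}.ncard :=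
  (Set.ncard_preimage_of_injective_subset_range (Fin.castSucc_injective m) fun _ hj =>
    Fin.exists_castSucc_eq.mpr fun h => hx (h ▸ hj)).symm

theorem sameOrder_cons_last_prefixPat [LinearOrder α] [LinearOrder β]
    {p : Fin (m + 1) → α} {q : Fin (m + 1) → β}
    (hp : Function.Injective p) (hq : Function.Injective q)
    (hpq : SameOrder (suffixPat p) (prefixPat q))
    (hrank : {j | p j < p 0}.ncard = {j | q j < q (Fin.last m)}.ncard) :
    SameOrder p (Fin.cons (q (Fin.last m)) (prefixPat q)) := by
  have hp0 : p 0 ∉ Set.range (suffixPat p) := fun ⟨k, hk⟩ => Fin.succ_ne_zero k (hp hk)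
  have hqm : q (Fin.last m) ∉ Set.range (prefixPat q) := fun ⟨k, hk⟩ =>
    (Fin.castSucc_lt_last k).ne (hq hk)
  rw [ncard_setOf_lt_eq_suffixPat p (lt_irrefl _),
    ncard_setOf_lt_eq_prefixPat q (lt_irrefl _)] at hrank
  rw [← Fin.cons_self_tail p]
  exact hpq.cons (hpq.lt_apply_iff_of_ncard_eq hp0 hqm hrank)

theorem sameOrder_of_prefixPat_suffixPat [LT α] [LT β]
    {u : Fin (m + 2) → α} {v : Fin (m + 2) → β}
    (hpre : SameOrder (prefixPat u) (prefixPat v)) (hsuf : SameOrder (suffixPat u) (suffixPat v))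
    (h0 : u 0 < u (Fin.last (m + 1)) ↔ v 0 < v (Fin.last (m + 1)))
    (h1 : u (Fin.last (m + 1)) < u 0 ↔ v (Fin.last (m + 1)) < v 0) : SameOrder u v := by
  intro i j
  cases i using Fin.cases with
  | zero =>
    cases j using Fin.lastCases with
    | last => exact h0
    | cast j => exact hpre 0 j
  | succ i =>
    cases j using Fin.cases with
    | zero =>
      cases i using Fin.lastCases with
      | last => exact h1
      | cast i => exact hpre i.succ 0
    | succ j => exact hsuf i j

/-- Doubling the ranks of `q` leaves room for the odd first entry `2 * rank q (last m) + e`,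
adjacent (for `e = ±1`) to the last entry `2 * rank q (last m)`. -/
noncomputable def fusionPat [LT α] (q : Fin (m + 1) → α) (e : ℤ) : Fin (m + 2) → ℤ :=
  Fin.cons (2 * rank q (Fin.last m) + e) fun j => 2 * (rank q j : ℤ)

variable [LinearOrder α] {q : Fin (m + 1) → α} {e : ℤ}

theorem fusionPat_zero : fusionPat q e 0 = 2 * rank q (Fin.last m) + e := rfl

theorem fusionPat_last : fusionPat q e (Fin.last (m + 1)) = 2 * rank q (Fin.last m) := by
  rw [← Fin.succ_last]
  rfl

theorem sameOrder_suffixPat_fusionPat : SameOrder (suffixPat (fusionPat q e)) q :=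
  sameOrder_two_mul_rank q

theorem fusionPat_injective (hq : Function.Injective q) (he : e = 1 ∨ e = -1) :
    Function.Injective (fusionPat q e) := by
  refine Fin.cons_injective_iff.mpr ⟨?_, fun i j hij => rank_injective hq (by simpa using hij)⟩
  rintro ⟨j, hj⟩
  dsimp only at hj
  omega

theorem sameOrder_prefixPat_fusionPat (hq : Function.Injective q) (he : e = 1 ∨ e = -1) :
    SameOrder (prefixPat (fusionPat q e)) (Fin.cons (q (Fin.last m)) (prefixPat q)) := by
  rw [fusionPat, prefixPat_cons]
  refine SameOrder.cons (fun i j => sameOrder_two_mul_rank q i.castSucc j.castSucc) fun k => ?_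
  have hne : rank q k.castSucc ≠ rank q (Fin.last m) :=
    (rank_injective hq).ne (Fin.castSucc_lt_last k).ne
  simp only [prefixPat]
  rw [← rank_lt_rank_iff q, ← rank_lt_rank_iff q]
  omega

end Fusion

/-- Case 2 of pattern fusion yields exactly two order-classes: when the rank
counts of `p 0` in `p` and of the last entry of `q` in `q` agree, there are
fusions `s` (with first entry below last) and `s'` (with last entry below
first), these are order-inequivalent, and every injective fusion of `p` and `q`
is order-equivalent to `s` or to `s'`. -/
theorem fusion_case_two_classes {m : ℕ} (p q : Fin (m + 1) → ℝ)
    (hp : Function.Injective p) (hq : Function.Injective q)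
    (hpq : ∀ i j : Fin m, suffixPat p i < suffixPat p j ↔ prefixPat q i < prefixPat q j)
    (hrank : {j | p j < p 0}.ncard = {j | q j < q (Fin.last m)}.ncard) :
    ∃ s s' : Fin (m + 2) → ℝ,
      Function.Injective s ∧ Function.Injective s' ∧
      (∀ i j : Fin (m + 1), prefixPat s i < prefixPat s j ↔ p i < p j) ∧
      (∀ i j : Fin (m + 1), suffixPat s i < suffixPat s j ↔ q i < q j) ∧
      (∀ i j : Fin (m + 1), prefixPat s' i < prefixPat s' j ↔ p i < p j) ∧
      (∀ i j : Fin (m + 1), suffixPat s' i < suffixPat s' j ↔ q i < q j) ∧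
      s 0 < s (Fin.last (m + 1)) ∧ s' (Fin.last (m + 1)) < s' 0 ∧
      ¬ (∀ i j, s i < s j ↔ s' i < s' j) ∧
      (∀ w : Fin (m + 2) → ℝ, Function.Injective w →
        (∀ i j : Fin (m + 1), prefixPat w i < prefixPat w j ↔ p i < p j) →
        (∀ i j : Fin (m + 1), suffixPat w i < suffixPat w j ↔ q i < q j) →
        ((∀ i j, w i < w j ↔ s i < s j) ∨ (∀ i j, w i < w j ↔ s' i < s' j))) := by
  have hrot := sameOrder_cons_last_prefixPat hp hq hpq hrank
  have hinj (e : ℤ) (he : e = 1 ∨ e = -1) :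
      Function.Injective (Int.cast ∘ fusionPat q e : _ → ℝ) :=
    Int.cast_injective.comp (fusionPat_injective hq he)
  have hpre (e : ℤ) (he : e = 1 ∨ e = -1) :
      SameOrder (prefixPat (Int.cast ∘ fusionPat q e : _ → ℝ)) p :=
    ((Int.cast_strictMono.sameOrder_comp _).trans
      (sameOrder_prefixPat_fusionPat hq he)).trans hrot.symm
  have hsuf (e : ℤ) : SameOrder (suffixPat (Int.cast ∘ fusionPat q e : _ → ℝ)) q :=
    (Int.cast_strictMono.sameOrder_comp _).trans sameOrder_suffixPat_fusionPat
  set s : Fin (m + 2) → ℝ := Int.cast ∘ fusionPat q (-1)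
  set s' : Fin (m + 2) → ℝ := Int.cast ∘ fusionPat q 1
  have hs : s 0 < s (Fin.last (m + 1)) := by simp [s, fusionPat_zero, fusionPat_last]
  have hs' : s' (Fin.last (m + 1)) < s' 0 := by simp [s', fusionPat_zero, fusionPat_last]
  refine ⟨s, s', hinj _ (.inr rfl), hinj _ (.inl rfl), hpre _ (.inr rfl), hsuf _,
    hpre _ (.inl rfl), hsuf _, hs, hs', fun h => ((h 0 _).mp hs).not_gt hs', ?_⟩
  intro w hw hwp hwq
  rcases (hw.ne (Fin.last_pos (n := m)).ne).lt_or_gt with hlt | hgt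
  · exact .inl <| sameOrder_of_prefixPat_suffixPat (SameOrder.trans hwp (hpre _ (.inr rfl)).symm)
      (SameOrder.trans hwq (hsuf _).symm) (iff_of_true hlt hs) (iff_of_false hlt.asymm hs.asymm)
  · exact .inr <| sameOrder_of_prefixPat_suffixPat (SameOrder.trans hwp (hpre _ (.inl rfl)).symm)
      (SameOrder.trans hwq (hsuf _).symm) (iff_of_false hgt.asymm hs'.asymm) (iff_of_true hgt hs')
end

section
/- (Each candidate pattern is generated exactly once, part of Theorem 3 of the paper.) If σ, τ : Fin (m+1) → Fin (m+1) are bijections such that the prefixes of σ and τ have the same relative order, the suffixes of σ and τ have the same relative order, and (σ 0 < σ m ↔ τ 0 < τ m), then σ = τ. Hence, a length-(m+1) permutation pattern is determined by its prefix order-preserving pattern, its suffix order-preserving pattern, and the order relation between its first and last entries. -/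
/-- Each candidate pattern is generated exactly once (part of Theorem 3 of the
paper): a length-`(m+1)` permutation pattern is determined by its prefix OPP,
its suffix OPP, and the order relation between its first and last entries. -/
theorem perm_eq_of_prefix_suffix_endpoint {m : ℕ}
    (σ τ : Fin (m + 1) → Fin (m + 1))
    (hσ : Function.Bijective σ) (hτ : Function.Bijective τ)
    (hpre : ∀ i j : Fin m, prefixPat σ i < prefixPat σ j ↔ prefixPat τ i < prefixPat τ j)
    (hsuf : ∀ i j : Fin m, suffixPat σ i < suffixPat σ j ↔ suffixPat τ i < suffixPat τ j)
    (hend : σ 0 < σ (Fin.last m) ↔ τ 0 < τ (Fin.last m)) :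
    σ = τ := by
  -- reversed endpoint comparison
  have aux : ∀ (f g : Fin (m + 1) → Fin (m + 1)), Function.Injective f →
      Function.Injective g → (f 0 < f (Fin.last m) ↔ g 0 < g (Fin.last m)) →
      f (Fin.last m) < f 0 → g (Fin.last m) < g 0 := by
    intro f g hf hg hiff h
    rcases lt_trichotomy (g (Fin.last m)) (g 0) with h' | h' | h'
    · exact h'
    · have : (Fin.last m) = 0 := hg h'
      rw [this] at h
      exact absurd h (lt_irrefl _)
    · exact absurd h (lt_asymm (hiff.mpr h'))
  have hend' : σ (Fin.last m) < σ 0 ↔ τ (Fin.last m) < τ 0 :=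
    ⟨aux σ τ hσ.1 hτ.1 hend, aux τ σ hτ.1 hσ.1 hend.symm⟩
  have key : ∀ i j : Fin (m + 1), σ i < σ j ↔ τ i < τ j := by
    intro i j
    rcases Fin.eq_castSucc_or_eq_last i with ⟨i', rfl⟩ | rfl <;>
      rcases Fin.eq_castSucc_or_eq_last j with ⟨j', rfl⟩ | rfl
    · exact hpre i' j'
    · rcases Fin.eq_zero_or_eq_succ i'.castSucc with h0 | ⟨i₀, hi⟩
      · rw [h0]; exact hend
      · rcases Fin.eq_zero_or_eq_succ (Fin.last m) with hl | ⟨j₀, hj⟩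
        · exfalso
          have := congrArg Fin.val hl
          simp [Fin.last] at this
          have := i'.isLt; omega
        · rw [hi, hj]; exact hsuf i₀ j₀
    · rcases Fin.eq_zero_or_eq_succ j'.castSucc with h0 | ⟨j₀, hj⟩
      · rw [h0]; exact hend'
      · rcases Fin.eq_zero_or_eq_succ (Fin.last m) with hl | ⟨i₀, hi⟩
        · exfalso
          have := congrArg Fin.val hl
          simp [Fin.last] at this
          have := j'.isLt; omega
        · rw [hi, hj]; exact hsuf i₀ j₀
    · simp
  let e := Equiv.ofBijective τ hτ
  have hτe : ∀ x, τ (e.symm x) = x := fun x => e.apply_symm_apply x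
  have hmono : StrictMono (σ ∘ e.symm) := by
    intro a b hab
    have : τ (e.symm a) < τ (e.symm b) := by rw [hτe, hτe]; exact hab
    exact (key _ _).mpr this
  have hrange : Set.range (σ ∘ e.symm) = Set.range (id : Fin (m+1) → Fin (m+1)) := by
    rw [Set.range_id, Set.range_comp, Equiv.range_eq_univ, Set.image_univ,
      hσ.2.range_eq]
  haveI : WellFoundedLT (Fin (m+1)) := inferInstance
  have hid : (σ ∘ e.symm) = id := (StrictMono.range_inj (β := Fin (m+1)) (γ := Fin (m+1)) hmono strictMono_id).mp hrange
  funext x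
  have := congrFun hid (e x)
  simp only [Function.comp_apply, Equiv.symm_apply_apply, id_eq] at this
  rw [this]
  rfl
end

section
/- (Correctness of the Case-1 fusion formula.) Let m ≥ 1 and let p, q : Fin m → Fin m be bijections (0-indexed rank representations of order-preserving patterns) such that the suffix of p and the prefix of q have the same relative order, and (p 0 : ℕ) ≠ (q (m−1) : ℕ). Define r : Fin (m+1) → Fin (m+1) by: r 0 = p 0 (as a natural number) if (p 0 : ℕ) < (q (m−1) : ℕ), and r 0 = (p 0 : ℕ) + 1 otherwise; and for each i < m, r (i+1) = q i (as a natural number) if (q i : ℕ) < (r 0 : ℕ), and r (i+1) = (q i : ℕ) + 1 otherwise. Then r is a bijection of Fin (m+1), the prefix of r has the same relative order as p, and the suffix of r has the same relative order as q. -/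
open Finset in
lemma count_missing {m : ℕ} (f : Fin m → Fin (m+1)) (hf : Function.Injective f)
    (c : Fin (m+1)) (hc : ∀ k, f k ≠ c) (x : Fin (m+1)) :
    (Finset.univ.filter fun k => f k < x).card
      = if (c : ℕ) < (x : ℕ) then (x : ℕ) - 1 else (x : ℕ) := by
  have himg : (Finset.univ.image f) = ({c}ᶜ : Finset (Fin (m+1))) := by
    apply Finset.eq_of_subset_of_card_le
    · intro z hz
      simp only [Finset.mem_image] at hz
      obtain ⟨k, _, rfl⟩ := hz
      simpa using hc k
    · rw [Finset.card_image_of_injective _ hf]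
      simp [Finset.card_compl]
  have h1 : (Finset.univ.filter fun k => f k < x).card
      = ((Finset.univ.image f).filter (· < x)).card := by
    rw [Finset.filter_image, Finset.card_image_of_injective _ hf]
  rw [h1, himg]
  have h2 : (({c}ᶜ : Finset (Fin (m+1))).filter (· < x))
      = (Finset.univ.filter (· < x)) \ ({c} : Finset _).filter (· < x) := by
    ext z
    simp only [Finset.mem_filter, Finset.mem_compl, Finset.mem_sdiff, Finset.mem_singleton,
      Finset.mem_univ, true_and]
    tauto
  have h3 : (Finset.univ.filter (· < x) : Finset (Fin (m+1))) = Finset.Iio x := by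
    ext z; simp
  have h4 : (({c} : Finset (Fin (m+1))).filter (· < x)).card
      = if (c : ℕ) < (x : ℕ) then 1 else 0 := by
    split <;> rename_i h
    · rw [Finset.filter_singleton, if_pos (Fin.lt_def.mpr h), Finset.card_singleton]
    · rw [Finset.filter_singleton, if_neg (by rw [Fin.lt_def]; omega), Finset.card_empty]
  rw [h2, Finset.card_sdiff_of_subset (by intro z hz; simp only [Finset.mem_filter] at hz ⊢; exact ⟨Finset.mem_univ z, hz.2⟩), h3, Fin.card_Iio, h4]
  split <;> omega


/-- Correctness of the Case-1 fusion formula: when the first rank of `p`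
differs from the last rank of `q`, the pattern `r` built by the fusion formula
is a bijection whose prefix is order-equivalent to `p` and whose suffix is
order-equivalent to `q`. -/
theorem fusion_case_one_formula_correct {m : ℕ}
    (p q : Fin (m + 1) → Fin (m + 1))
    (hp : Function.Bijective p) (hq : Function.Bijective q)
    (hpq : ∀ i j : Fin m, suffixPat p i < suffixPat p j ↔ prefixPat q i < prefixPat q j)
    (hne : (p 0 : ℕ) ≠ (q (Fin.last m) : ℕ))
    (r : Fin (m + 2) → Fin (m + 2))
    (hr0 : (r 0 : ℕ) =
      if (p 0 : ℕ) < (q (Fin.last m) : ℕ) then (p 0 : ℕ) else (p 0 : ℕ) + 1)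
    (hri : ∀ i : Fin (m + 1), (r i.succ : ℕ) =
      if (q i : ℕ) < (r 0 : ℕ) then (q i : ℕ) else (q i : ℕ) + 1) :
    Function.Bijective r ∧
    (∀ i j : Fin (m + 1), prefixPat r i < prefixPat r j ↔ p i < p j) ∧
    (∀ i j : Fin (m + 1), suffixPat r i < suffixPat r j ↔ q i < q j) := by
  set c : ℕ := (r 0 : ℕ) with hc
  -- key counting facts
  have hpne : ∀ k : Fin m, p k.succ ≠ p 0 := fun k h =>
    Fin.succ_ne_zero k (hp.injective h)
  have hqne : ∀ k : Fin m, q k.castSucc ≠ q (Fin.last m) := fun k h =>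
    (Fin.castSucc_lt_last k).ne (hq.injective h)
  have hkey : ∀ k : Fin m, ((p 0 : ℕ) < (p k.succ : ℕ) ↔ c ≤ (q k.castSucc : ℕ)) := by
    intro k
    have e1 := count_missing (fun k' : Fin m => p k'.succ)
      (fun a b h => Fin.succ_injective _ (hp.injective h)) (p 0) hpne (p k.succ)
    have e2 := count_missing (fun k' : Fin m => q k'.castSucc)
      (fun a b h => Fin.castSucc_injective _ (hq.injective h)) (q (Fin.last m)) hqne
      (q k.castSucc)
    have hfe : (Finset.univ.filter fun k' : Fin m => p k'.succ < p k.succ)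
        = (Finset.univ.filter fun k' : Fin m => q k'.castSucc < q k.castSucc) := by
      apply Finset.filter_congr
      intro k' _
      have := hpq k' k
      simp only [suffixPat, prefixPat] at this
      exact this
    rw [hfe, e2] at e1
    have h1 : (p k.succ : ℕ) ≠ (p 0 : ℕ) := fun h => hpne k (Fin.val_injective h)
    have h2 : (q k.castSucc : ℕ) ≠ (q (Fin.last m) : ℕ) := fun h => hqne k (Fin.val_injective h)
    rw [hr0] at hc
    split at e1 <;> split at e1 <;> split at hc <;> omega
  have hcle : c ≤ m + 1 := by rw [hr0]; have := Fin.is_le (p 0); split <;> omega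
  have hqle : ∀ i : Fin (m+1), (q i : ℕ) ≤ m := fun i => Fin.is_le _
  -- values of r
  have hrne : ∀ i : Fin (m + 1), (r i.succ : ℕ) ≠ c := by
    intro i; rw [hri i]; split <;> omega
  have hinj : Function.Injective r := by
    intro i j hij
    have hval : (r i : ℕ) = (r j : ℕ) := congrArg Fin.val hij
    cases i using Fin.cases with
    | zero =>
      cases j using Fin.cases with
      | zero => rfl
      | succ l => exact absurd hval.symm (hrne l)
    | succ k =>
      cases j using Fin.cases with
      | zero => exact absurd hval (hrne k)
      | succ l =>
        have hv : (q k : ℕ) = (q l : ℕ) := by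
          rw [hri k, hri l] at hval; split at hval <;> split at hval <;> omega
        rw [hq.injective (Fin.val_injective hv)]
  refine ⟨Finite.injective_iff_bijective.mp hinj, ?_, ?_⟩
  · -- prefix
    have hpre : ∀ k : Fin m, (prefixPat r k.succ).val =
        if (q k.castSucc : ℕ) < c then (q k.castSucc : ℕ) else (q k.castSucc : ℕ) + 1 := by
      intro k
      show (r k.succ.castSucc : ℕ) = _
      rw [← Fin.succ_castSucc, hri k.castSucc]
    have hpre0 : (prefixPat r (0 : Fin (m+1))).val = c := by
      show (r (Fin.castSucc 0) : ℕ) = c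
      rw [Fin.castSucc_zero]
    intro i j
    rw [Fin.lt_def, Fin.lt_def]
    cases i using Fin.cases with
    | zero =>
      cases j using Fin.cases with
      | zero => simp
      | succ l =>
        rw [hpre0, hpre l]
        have hk := hkey l
        have := hqle l.castSucc
        constructor
        · intro h; rw [hk]; split at h <;> omega
        · intro h; rw [hk] at h; split <;> omega
    | succ k =>
      cases j using Fin.cases with
      | zero =>
        rw [hpre0, hpre k]
        have hk := hkey k
        have h1 : (p k.succ : ℕ) ≠ (p 0 : ℕ) := fun h => hpne k (Fin.val_injective h)
        constructor
        · intro h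
          have : ¬ c ≤ (q k.castSucc : ℕ) := by split at h <;> omega
          rw [← hk] at this; omega
        · intro h
          have : ¬ c ≤ (q k.castSucc : ℕ) := by rw [← hk]; omega
          split <;> omega
      | succ l =>
        rw [hpre k, hpre l]
        have h := hpq k l
        simp only [suffixPat, prefixPat, Fin.lt_def] at h
        rw [h]
        split <;> split <;> omega
  · -- suffix
    intro i j
    show r i.succ < r j.succ ↔ _
    rw [Fin.lt_def, Fin.lt_def, hri i, hri j]
    split <;> split <;> omega
end

section
/- (Correctness of the Case-2 fusion formulas.) Let m ≥ 1 and let p, q : Fin m → Fin m be bijections (0-indexed rank representations) such that the suffix of p and the prefix of q have the same relative order, and (p 0 : ℕ) = (q (m−1) : ℕ) =: c. Define r, h : Fin (m+1) → Fin (m+1) by: r 0 = c, r m = c + 1, h 0 = c + 1, h m = c, and for each i with 0 ≤ i ≤ m − 2: r (i+1) = h (i+1) = q i (as a natural number) if (q i : ℕ) < c, and r (i+1) = h (i+1) = (q i : ℕ) + 1 otherwise. Then r and h are bijections of Fin (m+1) with r ≠ h, r 0 < r m, h m < h 0, the prefixes of both r and h have the same relative order as p, and the suffixes of both r and h have the same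 relative order as q. -/
/-!
Let `a := p 0 = q (last m)`. The fusion formulas say that the suffix of `r` is `q` followed by
the order embedding `a.castSucc.succAbove` skipping the value `c`, and the suffix of `h` is `q`
followed by `a.succ.succAbove`, which skips `c + 1`; the two embeddings agree away from `a`.
The suffix of `p` and the prefix of `q` are order-equivalent injections with the same image
`{a}ᶜ`, hence equal, so the prefixes of `r` and `h` are `p` followed by the other embedding.
Order-equivalence is then strict monotonicity of `succAbove`, and bijectivity holds because the
first entry lies outside the range of the suffix.
-/

open Function

theorem eq_of_range_eq_of_lt_iff {α : Type*} [LinearOrder α] {k : ℕ} {u v : Fin k → α}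
    (hv : Injective v) (hrange : Set.range u = Set.range v)
    (hlt : ∀ i j, u i < u j ↔ v i < v j) : u = v := by
  set σ := Tuple.sort v
  have hvσ : StrictMono (v ∘ σ) :=
    (Tuple.monotone_sort v).strictMono_of_injective (hv.comp σ.injective)
  have huσ : StrictMono (u ∘ σ) := fun i j hij => (hlt _ _).2 (hvσ hij)
  have : u ∘ σ = v ∘ σ := by
    rwa [← huσ.range_inj hvσ, EquivLike.range_comp, EquivLike.range_comp]
  exact σ.surjective.injective_comp_right this

theorem range_suffixPat {n : ℕ} {α : Type*} {u : Fin (n + 1) → α} (hu : Injective u) :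
    Set.range (suffixPat u) = Set.range u \ {u 0} := by
  ext x
  constructor
  · rintro ⟨j, rfl⟩
    exact ⟨⟨j.succ, rfl⟩, fun h => Fin.succ_ne_zero j (hu h)⟩
  · rintro ⟨⟨j, rfl⟩, hj⟩
    obtain ⟨i, rfl⟩ := Fin.exists_succ_eq.2 (fun h : j = 0 => hj (h ▸ rfl))
    exact ⟨i, rfl⟩

theorem range_prefixPat {n : ℕ} {α : Type*} {u : Fin (n + 1) → α} (hu : Injective u) :
    Set.range (prefixPat u) = Set.range u \ {u (Fin.last n)} := by
  ext x
  constructor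
  · rintro ⟨j, rfl⟩
    exact ⟨⟨j.castSucc, rfl⟩, fun h => (Fin.castSucc_lt_last j).ne (hu h)⟩
  · rintro ⟨⟨j, rfl⟩, hj⟩
    obtain ⟨i, rfl⟩ := Fin.exists_castSucc_eq.2 (fun h : j = Fin.last n => hj (h ▸ rfl))
    exact ⟨i, rfl⟩

theorem Fin.val_succAbove_castSucc {n : ℕ} (a x : Fin (n + 1)) :
    (a.castSucc.succAbove x : ℕ) = if (x : ℕ) < a then (x : ℕ) else (x : ℕ) + 1 := by
  split_ifs with h
  · rw [Fin.succAbove_castSucc_of_lt _ _ h, Fin.val_castSucc]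
  · rw [Fin.succAbove_castSucc_of_le _ _ (not_lt.1 h), Fin.val_succ]

theorem Fin.succAbove_succ_of_ne {n : ℕ} {a x : Fin (n + 1)} (h : x ≠ a) :
    a.succ.succAbove x = a.castSucc.succAbove x := by
  rcases h.lt_or_gt with h | h
  · rw [Fin.succAbove_succ_of_le _ _ h.le, Fin.succAbove_castSucc_of_lt _ _ h]
  · rw [Fin.succAbove_succ_of_lt _ _ h, Fin.succAbove_castSucc_of_le _ _ h.le]

theorem bijective_of_suffixPat_eq_succAbove_comp {n : ℕ} {w : Fin (n + 1) → Fin (n + 1)}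
    {q : Fin n → Fin n} (hq : Injective q) (hw : suffixPat w = (w 0).succAbove ∘ q) :
    Bijective w := by
  refine Finite.injective_iff_bijective.1 ?_
  rw [← Fin.cons_self_tail w]
  refine Fin.cons_injective_of_injective ?_ ?_
  · rintro ⟨j, hj⟩
    exact Fin.succAbove_ne _ _ ((congrFun hw j).symm.trans hj)
  · exact (hw ▸ (Fin.succAbove_right_injective.comp hq) : Injective (suffixPat w))

theorem suffixPat_eq_prefixPat_of_lt_iff {n : ℕ} {p q : Fin (n + 1) → Fin (n + 1)}
    (hp : Bijective p) (hq : Bijective q) (h0 : p 0 = q (Fin.last n))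
    (hpq : ∀ i j : Fin n, suffixPat p i < suffixPat p j ↔ prefixPat q i < prefixPat q j) :
    suffixPat p = prefixPat q := by
  refine eq_of_range_eq_of_lt_iff (hq.injective.comp (Fin.castSucc_injective n)) ?_ hpq
  rw [range_suffixPat hp.injective, range_prefixPat hq.injective, hp.surjective.range_eq,
    hq.surjective.range_eq, h0]

section Fusion

variable {n : ℕ} {w : Fin (n + 2) → Fin (n + 2)} {p q : Fin (n + 1) → Fin (n + 1)}
  {a b : Fin (n + 2)}

theorem suffixPat_eq_succAbove_comp (hlast : w (Fin.last _) = a.succAbove (q (Fin.last n)))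
    (hmid : ∀ i : Fin n, w i.castSucc.succ = a.succAbove (q i.castSucc)) :
    suffixPat w = a.succAbove ∘ q := by
  funext j
  induction j using Fin.lastCases with
  | last => exact hlast
  | cast i => exact hmid i

theorem prefixPat_eq_succAbove_comp (hp : Injective p) (hpq : suffixPat p = prefixPat q)
    (hsuffix : suffixPat w = a.succAbove ∘ q) (h0 : w 0 = b.succAbove (p 0))
    (hab : ∀ x ≠ p 0, a.succAbove x = b.succAbove x) :
    prefixPat w = b.succAbove ∘ p := by
  funext j
  induction j using Fin.cases with
  | zero => exact h0
  | succ i =>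
    have hpi : p i.succ = q i.castSucc := congrFun hpq i
    calc w i.castSucc.succ = a.succAbove (p i.succ) := hpi ▸ congrFun hsuffix i.castSucc
      _ = b.succAbove (p i.succ) := hab _ (hp.ne (Fin.succ_ne_zero i))

end Fusion

/-- Correctness of the Case-2 fusion formulas: when the first rank of `p`
equals the last rank of `q` (call it `c`), the two patterns `r` and `h` built
by the fusion formulas are distinct bijections, with `r 0 < r m` and
`h m < h 0`, whose prefixes are order-equivalent to `p` and whose suffixes are
order-equivalent to `q`. -/
theorem fusion_case_two_formulas_correct {m : ℕ}
    (p q : Fin (m + 1) → Fin (m + 1))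
    (hp : Function.Bijective p) (hq : Function.Bijective q)
    (hpq : ∀ i j : Fin m, suffixPat p i < suffixPat p j ↔ prefixPat q i < prefixPat q j)
    (c : ℕ) (hc : (p 0 : ℕ) = c) (hc' : (q (Fin.last m) : ℕ) = c)
    (r h : Fin (m + 2) → Fin (m + 2))
    (hr0 : (r 0 : ℕ) = c) (hrm : (r (Fin.last (m + 1)) : ℕ) = c + 1)
    (hh0 : (h 0 : ℕ) = c + 1) (hhm : (h (Fin.last (m + 1)) : ℕ) = c)
    (hmid : ∀ i : Fin m,
      (r i.castSucc.succ : ℕ) =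
        (if (q i.castSucc : ℕ) < c then (q i.castSucc : ℕ) else (q i.castSucc : ℕ) + 1) ∧
      (h i.castSucc.succ : ℕ) =
        (if (q i.castSucc : ℕ) < c then (q i.castSucc : ℕ) else (q i.castSucc : ℕ) + 1)) :
    Function.Bijective r ∧ Function.Bijective h ∧ r ≠ h ∧
    r 0 < r (Fin.last (m + 1)) ∧ h (Fin.last (m + 1)) < h 0 ∧
    (∀ i j : Fin (m + 1), prefixPat r i < prefixPat r j ↔ p i < p j) ∧
    (∀ i j : Fin (m + 1), suffixPat r i < suffixPat r j ↔ q i < q j) ∧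
    (∀ i j : Fin (m + 1), prefixPat h i < prefixPat h j ↔ p i < p j) ∧
    (∀ i j : Fin (m + 1), suffixPat h i < suffixPat h j ↔ q i < q j) := by
  have hqp : q (Fin.last m) = p 0 := Fin.ext (hc'.trans hc.symm)
  have hr0' : r 0 = (p 0).castSucc := Fin.ext (hr0.trans hc.symm)
  have hh0' : h 0 = (p 0).succ := Fin.ext (by rw [hh0, Fin.val_succ, hc])
  have hr_mid (i : Fin m) : r i.castSucc.succ = (p 0).castSucc.succAbove (q i.castSucc) :=
    Fin.ext (by rw [(hmid i).1, Fin.val_succAbove_castSucc, hc])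
  have hh_mid (i : Fin m) : h i.castSucc.succ = (p 0).succ.succAbove (q i.castSucc) := by
    have hne : q i.castSucc ≠ p 0 := hqp ▸ hq.injective.ne (Fin.castSucc_lt_last i).ne
    rw [Fin.succAbove_succ_of_ne hne]
    exact Fin.ext (by rw [(hmid i).2, Fin.val_succAbove_castSucc, hc])
  have hr_suffix : suffixPat r = (p 0).castSucc.succAbove ∘ q :=
    suffixPat_eq_succAbove_comp (Fin.ext (by simp [hrm, hqp, hc])) hr_mid
  have hh_suffix : suffixPat h = (p 0).succ.succAbove ∘ q :=
    suffixPat_eq_succAbove_comp (Fin.ext (by simp [hhm, hqp, hc])) hh_mid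
  have hpq' := suffixPat_eq_prefixPat_of_lt_iff hp hq hqp.symm hpq
  have hr_prefix : prefixPat r = (p 0).succ.succAbove ∘ p :=
    prefixPat_eq_succAbove_comp hp.injective hpq' hr_suffix (by simp [hr0'])
      fun _ hx => (Fin.succAbove_succ_of_ne hx).symm
  have hh_prefix : prefixPat h = (p 0).castSucc.succAbove ∘ p :=
    prefixPat_eq_succAbove_comp hp.injective hpq' hh_suffix (by simp [hh0'])
      fun _ hx => Fin.succAbove_succ_of_ne hx
  refine ⟨bijective_of_suffixPat_eq_succAbove_comp hq.injective (hr0' ▸ hr_suffix),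
    bijective_of_suffixPat_eq_succAbove_comp hq.injective (hh0' ▸ hh_suffix),
    fun hrh => by simpa [hr0, hh0] using congrArg Fin.val (congrFun hrh 0),
    Fin.lt_def.2 (by omega), Fin.lt_def.2 (by omega), ?_, ?_, ?_, ?_⟩
  all_goals
    intro i j
    simp only [hr_prefix, hr_suffix, hh_prefix, hh_suffix, Function.comp_apply,
      Fin.succAbove_lt_succAbove_iff]
end
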